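/- arXiv:1704.01357 — 2 statements merged into one kernel-verified Lean document; each statement's English description precedes it below -/
import Mathlib

section
/- Let 0 → H• → J• → K• → 0 be a short exact sequence of cochain complexes of sheaves (or more generally of objects in an abelian category) such that each H^k is an injective object and all differentials of H• vanish. If for every k the induced sequence on cohomology 0 → H^k(H•) → H^k(J•) → H^k(K•) → 0 is exact, then there exists a morphism of complexes s•: K• → J• with g• ∘ s• = id_{K•}, i.e. the sequence splits as a sequence of complexes. -/
/-!
Choose degreewise splittings `(r, s)` of `0 → H^k → J^k → K^k → 0` (possible since `H^k` is
injective). The failure of `s` to commute with the differentials is measured by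
`θ = s ≫ d_J ≫ r : K^i → H^{i+1}`, with `θ ≫ f = s ≫ d_J - d_K ≫ s`. On a cycle `z` of `K`,
`θ z` maps to the boundary `d_J (s z)`; as `H` has zero differentials, `H^{i+1}(H) = H^{i+1}`
injects into `H^{i+1}(J)`, so `θ` vanishes on cycles. Hence `θ` factors through
`K^i / Z^i ≅ im d_K ⊆ K^{i+1}` and, `H^{i+1}` being injective, extends to `w : K^{i+1} → H^{i+1}`
with `d_K ≫ w = θ`. Then `s + w ≫ f` is a morphism of complexes and a section of `g`.
-/

open CategoryTheory Limits

lemma CategoryTheory.Injective.exists_comp_eq_of_kernel_ι_comp_eq_zero {C : Type*} [Category C]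
    [Abelian C] {X Y I : C} [Injective I] (φ : X ⟶ Y) (τ : X ⟶ I) (hτ : kernel.ι φ ≫ τ = 0) :
    ∃ w : Y ⟶ I, φ ≫ w = τ := by
  refine ⟨Injective.factorThru (cokernel.desc _ τ hτ) (Abelian.factorThruCoimage φ), ?_⟩
  calc φ ≫ _ = Abelian.coimage.π φ ≫ Abelian.factorThruCoimage φ ≫ _ := by
        rw [← Category.assoc, Abelian.coimage.fac]
    _ = τ := by rw [Injective.comp_factorThru, cokernel.π_desc]

section

variable {C : Type*} [Category C] [Abelian C] {ι : Type*} {c : ComplexShape ι}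
  {H J : HomologicalComplex C c}

lemma HomologicalComplex.eq_zero_of_comp_f_eq_comp_d (hdiff : ∀ i j, H.d i j = 0) (f : H ⟶ J)
    {i j : ι} [Mono (homologyMap f j)] {A : C} (x : A ⟶ H.X j) (y : A ⟶ J.X i)
    (hxy : x ≫ f.f j = y ≫ J.d i j) : x = 0 := by
  have := H.isIso_homologyπ (c.prev j) j rfl (hdiff _ _)
  set α := H.liftCycles x (c.next j) rfl (by simp [hdiff])
  have hα : α ≫ H.homologyπ j = 0 := by
    rw [← cancel_mono (homologyMap f j), Category.assoc, homologyπ_naturality, zero_comp,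
      ← Category.assoc, liftCycles_comp_cyclesMap]
    exact J.liftCycles_homologyπ_eq_zero_of_boundary _ _ rfl y hxy
  have hα0 : α = 0 := by rw [← cancel_mono (H.homologyπ j), hα, zero_comp]
  calc x = α ≫ H.iCycles j := (H.liftCycles_i _ _ _ _).symm
    _ = 0 := by rw [hα0, zero_comp]

end

namespace CochainComplex

variable {C : Type*} [Category C] [Abelian C] {H J K : CochainComplex C ℤ} {f : H ⟶ J}
  {g : J ⟶ K}

abbrev degreewiseShortComplex (hfg : f ≫ g = 0) (k : ℤ) : ShortComplex C :=
  ShortComplex.mk (f.f k) (g.f k) <| by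
    rw [← HomologicalComplex.comp_f, hfg, HomologicalComplex.zero_f]

variable {hfg : f ≫ g = 0} (σ : ∀ k, (degreewiseShortComplex hfg k).Splitting)

def splittingObstruction (i j : ℤ) : K.X i ⟶ H.X j :=
  (σ i).s ≫ J.d i j ≫ (σ j).r

lemma splittingObstruction_comp_f (i j : ℤ) :
    splittingObstruction σ i j ≫ f.f j = (σ i).s ≫ J.d i j - K.d i j ≫ (σ j).s := by
  have hrf : (σ j).r ≫ f.f j = 𝟙 _ - g.f j ≫ (σ j).s := eq_sub_of_add_eq (σ j).id
  have hsg : (σ i).s ≫ g.f i = 𝟙 _ := (σ i).s_g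
  rw [splittingObstruction, Category.assoc, Category.assoc, hrf, Preadditive.comp_sub,
    Preadditive.comp_sub, Category.comp_id, ← g.comm_assoc, reassoc_of% hsg]

lemma iCycles_comp_splittingObstruction (hdiff : ∀ i j, H.d i j = 0) (i j : ℤ)
    [Mono (HomologicalComplex.homologyMap f j)] :
    K.iCycles i ≫ splittingObstruction σ i j = 0 :=
  HomologicalComplex.eq_zero_of_comp_f_eq_comp_d hdiff f _ (K.iCycles i ≫ (σ i).s) (by
    rw [Category.assoc, splittingObstruction_comp_f, Preadditive.comp_sub,
      K.iCycles_d_assoc, zero_comp, sub_zero, Category.assoc])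

lemma exists_d_comp_eq_splittingObstruction (hdiff : ∀ i j, H.d i j = 0) (j : ℤ)
    [Injective (H.X j)] [Mono (HomologicalComplex.homologyMap f j)] :
    ∃ w : K.X j ⟶ H.X j, ∀ i, i + 1 = j → K.d i j ≫ w = splittingObstruction σ i j := by
  have hnext : (ComplexShape.up ℤ).next (j - 1) = j := (ComplexShape.up ℤ).next_eq' (by simp)
  obtain ⟨w, hw⟩ := Injective.exists_comp_eq_of_kernel_ι_comp_eq_zero (K.d (j - 1) j)
    (splittingObstruction σ (j - 1) j) (by
      rw [← K.liftCycles_i (kernel.ι _) j hnext (kernel.condition _), Category.assoc,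
        iCycles_comp_splittingObstruction σ hdiff, comp_zero])
  refine ⟨w, fun i hij => ?_⟩
  obtain rfl : i = j - 1 := by omega
  exact hw

lemma exists_hom_comp_eq_id_of_d_comp_eq_splittingObstruction (hdiff : ∀ i j, H.d i j = 0)
    (w : ∀ k, K.X k ⟶ H.X k)
    (hw : ∀ i j, i + 1 = j → K.d i j ≫ w j = splittingObstruction σ i j) :
    ∃ s : K ⟶ J, s ≫ g = 𝟙 K := by
  refine ⟨{ f := fun k => (σ k).s + w k ≫ f.f k, comm' := ?_ }, ?_⟩
  · rintro i j (hij : i + 1 = j)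
    have hfd : f.f i ≫ J.d i j = 0 := by rw [f.comm, hdiff, zero_comp]
    rw [Preadditive.add_comp, Category.assoc, hfd, comp_zero, add_zero, Preadditive.comp_add,
      reassoc_of% (hw i j hij), splittingObstruction_comp_f, add_sub_cancel]
  · ext k
    have hfg' : f.f k ≫ g.f k = 0 := (degreewiseShortComplex hfg k).zero
    simp [hfg', (σ k).s_g]

end CochainComplex

/-- Lemma `sec` of the paper, direction (i) ⇒ (ii): a degreewise short exact
sequence of cochain complexes `0 → H• → J• → K• → 0` in an abelian category,
with each `H^k` injective and all differentials of `H•` zero, splits as a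
sequence of complexes provided the induced sequences on cohomology
`0 → H^k(H•) → H^k(J•) → H^k(K•) → 0` are exact for all `k`. -/
theorem stmt0 {C : Type*} [Category C] [Abelian C]
    (H J K : CochainComplex C ℤ) (f : H ⟶ J) (g : J ⟶ K)
    (hfg : f ≫ g = 0)
    (hinj : ∀ k : ℤ, Injective (H.X k))
    (hdiff : ∀ i j : ℤ, H.d i j = 0)
    (hses : ∀ k : ℤ, (ShortComplex.mk (f.f k) (g.f k)
      (by simp [← HomologicalComplex.comp_f, hfg])).ShortExact)
    (hcoh : ∀ k : ℤ, (ShortComplex.mk (HomologicalComplex.homologyMap f k)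
      (HomologicalComplex.homologyMap g k)
      (by simp [← HomologicalComplex.homologyMap_comp, hfg])).ShortExact) :
    ∃ s : K ⟶ J, s ≫ g = 𝟙 K := by
  have σ : ∀ k, (CochainComplex.degreewiseShortComplex hfg k).Splitting := fun k =>
    have := hinj k
    (hses k).splittingOfInjective
  choose w hw using fun j =>
    have := hinj j
    have := (hcoh j).mono_f
    CochainComplex.exists_d_comp_eq_splittingObstruction σ hdiff j
  exact CochainComplex.exists_hom_comp_eq_id_of_d_comp_eq_splittingObstruction σ hdiff w
    fun i j => hw j i
end

section
/- Let f: A → B be a linear map of finite-dimensional Q-vector spaces, α: A → U, β: B → U linear with α = β ∘ f. If f is injective and Im(α) = Im(β), then there exists a linear map θ: B → A with θ ∘ f = id_A and α ∘ θ = β. -/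
/-!
Pick any retraction `r` of `f` and any lift `θ₀` of `β` through `α` (it exists because `B` is
projective and `Im β ⊆ Im α`). Then `θ = r + θ₀ ∘ (id - f ∘ r)` does both jobs: `id - f ∘ r`
kills the image of `f`, so `θ ∘ f = r ∘ f = id`, and `α ∘ θ = α ∘ r + β - β ∘ f ∘ r = β`.
-/

namespace LinearMap

variable {R A B U : Type*} [Ring R] [AddCommGroup A] [Module R A] [AddCommGroup B] [Module R B]
  [AddCommGroup U] [Module R U]

theorem exists_comp_eq_of_range_le [Module.Projective R B] (α : A →ₗ[R] U) (β : B →ₗ[R] U)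
    (h : range β ≤ range α) : ∃ θ : B →ₗ[R] A, α ∘ₗ θ = β := by
  obtain ⟨θ, hθ⟩ := Module.projective_lifting_property α.rangeRestrict (β.codRestrict _
    fun b => h (mem_range_self β b)) α.surjective_rangeRestrict
  exact ⟨θ, by ext b; exact congrArg Subtype.val (LinearMap.congr_fun hθ b)⟩

theorem exists_retraction_comp_eq (f : A →ₗ[R] B) (α : A →ₗ[R] U) (β : B →ₗ[R] U)
    (hcomm : β ∘ₗ f = α) {r : B →ₗ[R] A} (hr : r ∘ₗ f = id) {θ₀ : B →ₗ[R] A}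
    (hθ₀ : α ∘ₗ θ₀ = β) :
    ∃ θ : B →ₗ[R] A, θ ∘ₗ f = id ∧ α ∘ₗ θ = β := by
  refine ⟨r + θ₀ ∘ₗ (id - f ∘ₗ r), ?_, ?_⟩
  · rw [add_comp, comp_assoc, sub_comp, comp_assoc, hr, id_comp, comp_id, sub_self, comp_zero,
      add_zero]
  · rw [comp_add, ← comp_assoc, hθ₀, comp_sub, comp_id, ← comp_assoc, hcomm, add_sub_cancel]

end LinearMap

theorem stmt5_general {A B U : Type*}
    [AddCommGroup A] [Module ℚ A]
    [AddCommGroup B] [Module ℚ B]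
    [AddCommGroup U] [Module ℚ U]
    (f : A →ₗ[ℚ] B) (α : A →ₗ[ℚ] U) (β : B →ₗ[ℚ] U)
    (hcomm : β ∘ₗ f = α)
    (hf : Function.Injective f)
    (himg : LinearMap.range α = LinearMap.range β) :
    ∃ θ : B →ₗ[ℚ] A, θ ∘ₗ f = LinearMap.id ∧ α ∘ₗ θ = β := by
  obtain ⟨r, hr⟩ := f.exists_leftInverse_of_injective (LinearMap.ker_eq_bot.mpr hf)
  obtain ⟨θ₀, hθ₀⟩ := LinearMap.exists_comp_eq_of_range_le α β himg.ge
  exact f.exists_retraction_comp_eq α β hcomm hr hθ₀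

/-- Converse direction of Remark `natural` / step (i) ⇒ (ii) in Theorem
`main2` of the paper, degreewise: if `f : A → B` is an injective linear map of
finite-dimensional `ℚ`-vector spaces and `α : A → U`, `β : B → U` satisfy
`α = β ∘ f` and `Im(α) = Im(β)`, then there is a retraction `θ : B → A` with
`θ ∘ f = id` and `α ∘ θ = β`. -/
theorem stmt5 {A B U : Type*}
    [AddCommGroup A] [Module ℚ A] [FiniteDimensional ℚ A]
    [AddCommGroup B] [Module ℚ B] [FiniteDimensional ℚ B]
    [AddCommGroup U] [Module ℚ U]
    (f : A →ₗ[ℚ] B) (α : A →ₗ[ℚ] U) (β : B →ₗ[ℚ] U)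
    (hcomm : β ∘ₗ f = α)
    (hf : Function.Injective f)
    (himg : LinearMap.range α = LinearMap.range β) :
    ∃ θ : B →ₗ[ℚ] A, θ ∘ₗ f = LinearMap.id ∧ α ∘ₗ θ = β :=
  stmt5_general f α β hcomm hf himg
end
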